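/- If the empty sequent is derivable in the resolution calculus RPL₀ from axioms ⊢ F₁, …, ⊢ F_n, then the set {F₁,…,F_n} of quantifier-free formulas is unsatisfiable (with free variables read universally); in particular, the calculus RPL₀ is sound. -/
import Mathlib


/- First-order terms. -/
inductive Tm where
  | var (x : ℕ)
  | app (f : ℕ) (ts : List Tm)

/-- Application of a substitution to a term. -/
def applyT (θ : ℕ → Tm) : Tm → Tm
  | .var x => θ x
  | .app f ts => .app f (ts.attach.map fun x => applyT θ x.1)
decreasing_by all_goals (simp_wf; have := List.sizeOf_lt_of_mem x.2; omega)

/- Quantifier-free first-order formulas. -/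
inductive Form where
  | atom (P : ℕ) (ts : List Tm)
  | conj (A B : Form)
  | disj (A B : Form)
  | neg (A : Form)

/-- Application of a substitution to a formula. -/
def applyF (θ : ℕ → Tm) : Form → Form
  | .atom P ts => .atom P (ts.map (applyT θ))
  | .conj A B => .conj (applyF θ A) (applyF θ B)
  | .disj A B => .disj (applyF θ A) (applyF θ B)
  | .neg A => .neg (applyF θ A)

/-- Occurrence of a variable in a term. -/
inductive VarInT (x : ℕ) : Tm → Prop where
  | refl : VarInT x (.var x)
  | inApp {f ts t} : t ∈ ts → VarInT x t → VarInT x (.app f ts)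

/-- Occurrence of a variable in a formula. -/
inductive VarInF (x : ℕ) : Form → Prop where
  | inAtom {P ts t} : t ∈ ts → VarInT x t → VarInF x (.atom P ts)
  | conjL {A B} : VarInF x A → VarInF x (.conj A B)
  | conjR {A B} : VarInF x B → VarInF x (.conj A B)
  | disjL {A B} : VarInF x A → VarInF x (.disj A B)
  | disjR {A B} : VarInF x B → VarInF x (.disj A B)
  | negI {A} : VarInF x A → VarInF x (.neg A)

/-- θ unifies a list of formulas if it identifies them all. -/
def UnifiesL (θ : ℕ → Tm) (As : List Form) : Prop :=
  ∀ A ∈ As, ∀ B ∈ As, applyF θ A = applyF θ B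

/-- θ is a most general unifier of a list of formulas. -/
def IsMGUL (θ : ℕ → Tm) (As : List Form) : Prop :=
  UnifiesL θ As ∧ ∀ τ : ℕ → Tm, UnifiesL τ As → ∃ δ : ℕ → Tm, ∀ x, τ x = applyT δ (θ x)

def IsAtomF : Form → Prop
  | .atom _ _ => True
  | _ => False

/-- Sequents: pairs of multisets of quantifier-free formulas. -/
abbrev Sequent := Multiset Form × Multiset Form

/-- The calculus RPL₀, with axioms taken from a set `Ax` of sequents. -/
inductive Deriv (Ax : Set Sequent) : Sequent → Prop where
  | ax {S} : S ∈ Ax → Deriv Ax S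
  | andr1 {Γ Δ A B} : Deriv Ax (Γ, (Form.conj A B) ::ₘ Δ) → Deriv Ax (Γ, A ::ₘ Δ)
  | andr2 {Γ Δ A B} : Deriv Ax (Γ, (Form.conj A B) ::ₘ Δ) → Deriv Ax (Γ, B ::ₘ Δ)
  | andl {Γ Δ A B} : Deriv Ax ((Form.conj A B) ::ₘ Γ, Δ) → Deriv Ax (A ::ₘ B ::ₘ Γ, Δ)
  | orr {Γ Δ A B} : Deriv Ax (Γ, (Form.disj A B) ::ₘ Δ) → Deriv Ax (Γ, A ::ₘ B ::ₘ Δ)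
  | orl1 {Γ Δ A B} : Deriv Ax ((Form.disj A B) ::ₘ Γ, Δ) → Deriv Ax (A ::ₘ Γ, Δ)
  | orl2 {Γ Δ A B} : Deriv Ax ((Form.disj A B) ::ₘ Γ, Δ) → Deriv Ax (B ::ₘ Γ, Δ)
  | negr {Γ Δ A} : Deriv Ax (Γ, (Form.neg A) ::ₘ Δ) → Deriv Ax (A ::ₘ Γ, Δ)
  | negl {Γ Δ A} : Deriv Ax ((Form.neg A) ::ₘ Γ, Δ) → Deriv Ax (Γ, A ::ₘ Δ)
  | res {Γ Δ Γ₂ Δ₂ : Multiset Form} {As Bs : List Form} {θ : ℕ → Tm}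
      (hA : As ≠ []) (hB : Bs ≠ [])
      (hatomA : ∀ A ∈ As, IsAtomF A) (hatomB : ∀ B ∈ Bs, IsAtomF B)
      (hdisj : ∀ x : ℕ, (∃ A ∈ As, VarInF x A) → ¬ ∃ B ∈ Bs, VarInF x B)
      (hmgu : IsMGUL θ (As ++ Bs))
      (h1 : Deriv Ax (Γ, Δ + ↑As)) (h2 : Deriv Ax (↑Bs + Γ₂, Δ₂)) :
      Deriv Ax ((Γ + Γ₂).map (applyF θ), (Δ + Δ₂).map (applyF θ))

/- First-order structures. -/
structure Str where
  D : Type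
  ne : Nonempty D
  fI : ℕ → List D → D
  pI : ℕ → List D → Prop

/-- Evaluation of a term in a structure under a variable assignment. -/
def evalT (M : Str) (v : ℕ → M.D) : Tm → M.D
  | .var x => v x
  | .app f ts => M.fI f (ts.attach.map fun x => evalT M v x.1)
decreasing_by all_goals (simp_wf; have := List.sizeOf_lt_of_mem x.2; omega)

/-- Satisfaction of a formula. -/
def holds (M : Str) (v : ℕ → M.D) : Form → Prop
  | .atom P ts => M.pI P (ts.map (evalT M v))
  | .conj A B => holds M v A ∧ holds M v B
  | .disj A B => holds M v A ∨ holds M v B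
  | .neg A => ¬ holds M v A

/-- A sequent Γ ⊢ Δ is valid in M if for every variable assignment, whenever all
    formulas of Γ hold, some formula of Δ holds (i.e. the universal closure of
    ⋀Γ → ⋁Δ holds). -/
def SeqValid (M : Str) (S : Sequent) : Prop :=
  ∀ v : ℕ → M.D, (∀ A ∈ S.1, holds M v A) → ∃ B ∈ S.2, holds M v B

theorem evalT_app (M : Str) (v : ℕ → M.D) (f : ℕ) (ts : List Tm) :
    evalT M v (.app f ts) = M.fI f (ts.map (evalT M v)) := by
  rw [evalT]; congr 1; simp

theorem applyT_app (θ : ℕ → Tm) (f : ℕ) (ts : List Tm) :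
    applyT θ (.app f ts) = .app f (ts.map (applyT θ)) := by
  rw [applyT]; congr 1; simp

theorem evalT_applyT (M : Str) (v : ℕ → M.D) (θ : ℕ → Tm) (t : Tm) :
    evalT M v (applyT θ t) = evalT M (fun x => evalT M v (θ x)) t := by
  have key : ∀ n, ∀ t : Tm, sizeOf t ≤ n →
      evalT M v (applyT θ t) = evalT M (fun x => evalT M v (θ x)) t := by
    intro n
    induction n with
    | zero => intro t ht; cases t <;> simp at ht
    | succ n ih =>
      intro t ht
      cases t with
      | var x => simp [applyT, evalT]
      | app f ts =>
        rw [applyT_app, evalT_app, evalT_app, List.map_map]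
        congr 1
        apply List.map_congr_left
        intro a ha
        have := List.sizeOf_lt_of_mem ha
        have : sizeOf a ≤ n := by simp at ht; omega
        exact ih a this
  exact key (sizeOf t) t le_rfl

theorem holds_applyF (M : Str) (v : ℕ → M.D) (θ : ℕ → Tm) (A : Form) :
    holds M v (applyF θ A) ↔ holds M (fun x => evalT M v (θ x)) A := by
  induction A with
  | atom P ts =>
    have key : List.map (evalT M v ∘ applyT θ) ts
        = List.map (evalT M (fun x => evalT M v (θ x))) ts :=
      List.map_congr_left (fun a _ => evalT_applyT M v θ a)
    simp only [applyF, holds, List.map_map, key]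
  | conj A B ihA ihB => simp [applyF, holds, ihA, ihB]
  | disj A B ihA ihB => simp [applyF, holds, ihA, ihB]
  | neg A ihA => simp [applyF, holds, ihA]

theorem deriv_valid {Ax : Set Sequent} {S : Sequent} (h : Deriv Ax S)
    (M : Str) (hAx : ∀ T ∈ Ax, SeqValid M T) : SeqValid M S := by
  induction h with
  | ax hS => exact hAx _ hS
  | andr1 _ ih =>
    intro v hΓ
    obtain ⟨B', hB', hh⟩ := ih v hΓ
    rw [Multiset.mem_cons] at hB'
    rcases hB' with rfl | hB'
    · exact ⟨_, Multiset.mem_cons_self _ _, hh.1⟩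
    · exact ⟨B', Multiset.mem_cons_of_mem hB', hh⟩
  | andr2 _ ih =>
    intro v hΓ
    obtain ⟨B', hB', hh⟩ := ih v hΓ
    rw [Multiset.mem_cons] at hB'
    rcases hB' with rfl | hB'
    · exact ⟨_, Multiset.mem_cons_self _ _, hh.2⟩
    · exact ⟨B', Multiset.mem_cons_of_mem hB', hh⟩
  | andl _ ih =>
    intro v hΓ
    apply ih v
    intro C hC
    rw [Multiset.mem_cons] at hC
    rcases hC with rfl | hC
    · exact ⟨hΓ _ (Multiset.mem_cons_self _ _),
        hΓ _ (Multiset.mem_cons_of_mem (Multiset.mem_cons_self _ _))⟩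
    · exact hΓ _ (Multiset.mem_cons_of_mem (Multiset.mem_cons_of_mem hC))
  | orr _ ih =>
    intro v hΓ
    obtain ⟨B', hB', hh⟩ := ih v hΓ
    rw [Multiset.mem_cons] at hB'
    rcases hB' with rfl | hB'
    · rcases hh with h1 | h2
      · exact ⟨_, Multiset.mem_cons_self _ _, h1⟩
      · exact ⟨_, Multiset.mem_cons_of_mem (Multiset.mem_cons_self _ _), h2⟩
    · exact ⟨B', Multiset.mem_cons_of_mem (Multiset.mem_cons_of_mem hB'), hh⟩
  | orl1 _ ih =>
    intro v hΓ
    apply ih v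
    intro C hC
    rw [Multiset.mem_cons] at hC
    rcases hC with rfl | hC
    · exact Or.inl (hΓ _ (Multiset.mem_cons_self _ _))
    · exact hΓ _ (Multiset.mem_cons_of_mem hC)
  | orl2 _ ih =>
    intro v hΓ
    apply ih v
    intro C hC
    rw [Multiset.mem_cons] at hC
    rcases hC with rfl | hC
    · exact Or.inr (hΓ _ (Multiset.mem_cons_self _ _))
    · exact hΓ _ (Multiset.mem_cons_of_mem hC)
  | negr _ ih =>
    intro v hΓ
    obtain ⟨B', hB', hh⟩ := ih v (fun C hC => hΓ _ (Multiset.mem_cons_of_mem hC))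
    rw [Multiset.mem_cons] at hB'
    rcases hB' with rfl | hB'
    · exact absurd (hΓ _ (Multiset.mem_cons_self _ _)) hh
    · exact ⟨B', hB', hh⟩
  | @negl Γ Δ A _ ih =>
    intro v hΓ
    by_cases hA : holds M v A
    · exact ⟨_, Multiset.mem_cons_self _ _, hA⟩
    · obtain ⟨B', hB', hh⟩ := ih v (by
        intro C hC
        rw [Multiset.mem_cons] at hC
        rcases hC with rfl | hC
        · exact hA
        · exact hΓ _ hC)
      exact ⟨B', Multiset.mem_cons_of_mem hB', hh⟩
  | @res Γ Δ Γ₂ Δ₂ As Bs θ hA hB hatomA hatomB hdisj hmgu h1 h2 ih1 ih2 =>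
    intro v hΓ
    set w : ℕ → M.D := fun x => evalT M v (θ x) with hw
    have hΓw : ∀ C ∈ Γ + Γ₂, holds M w C := by
      intro C hC
      have : applyF θ C ∈ (Γ + Γ₂).map (applyF θ) := Multiset.mem_map_of_mem _ hC
      have := hΓ _ this
      rwa [holds_applyF] at this
    obtain ⟨B', hB', hhB'⟩ := ih1 w
      (fun C hC => hΓw C (Multiset.mem_add.2 (Or.inl hC)))
    rw [Multiset.mem_add] at hB'
    rcases hB' with hB' | hB'
    · exact ⟨applyF θ B', Multiset.mem_map_of_mem _ (Multiset.mem_add.2 (Or.inl hB')),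
        (holds_applyF M v θ B').2 hhB'⟩
    · -- B' is one of As, holds under w
      rw [Multiset.mem_coe] at hB'
      have hAsholds : ∀ C ∈ Bs, holds M w C := by
        intro C hC
        have heq : applyF θ C = applyF θ B' :=
          hmgu.1 C (List.mem_append.2 (Or.inr hC)) B' (List.mem_append.2 (Or.inl hB'))
        have : holds M v (applyF θ B') := (holds_applyF M v θ B').2 hhB'
        rw [← heq] at this
        exact (holds_applyF M v θ C).1 this
      obtain ⟨B'', hB'', hhB''⟩ := ih2 w (by
        intro C hC
        rw [Multiset.mem_add] at hC
        rcases hC with hC | hC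
        · exact hAsholds C (Multiset.mem_coe.1 hC)
        · exact hΓw C (Multiset.mem_add.2 (Or.inr hC)))
      exact ⟨applyF θ B'', Multiset.mem_map_of_mem _ (Multiset.mem_add.2 (Or.inr hB'')),
        (holds_applyF M v θ B'').2 hhB''⟩

/-- soundness of RPL₀: if the empty sequent is derivable from axioms
    ⊢ F₁, …, ⊢ F_n, then the set {F₁,…,F_n} is unsatisfiable (free variables read
    universally). -/
theorem rpl0_sound (Fs : Set Form)
    (h : Deriv {S : Sequent | ∃ F ∈ Fs, S = (0, {F})} (0, 0)) :
    ¬ ∃ M : Str, ∀ F ∈ Fs, ∀ v : ℕ → M.D, holds M v F := by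
  rintro ⟨M, hM⟩
  have hv : SeqValid M (0, 0) := deriv_valid h M (by
    rintro T ⟨F, hF, rfl⟩
    intro v _
    exact ⟨F, Multiset.mem_singleton_self F, hM F hF v⟩)
  obtain ⟨d⟩ := M.ne
  obtain ⟨B, hB, _⟩ := hv (fun _ => d) (by simp)
  simp at hB
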